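/- arXiv:2102.01114 — 4 statements merged into one kernel-verified Lean document; each statement's English description precedes it below -/
import Mathlib

section
/- Let R be a commutative Noetherian ring, J ⊆ R an ideal, g ∈ R, and a ∈ R an element that is a nonzerodivisor on R/(J + (g)). Then a is a nonzerodivisor on R/J if and only if a is a nonzerodivisor on R/(J : g). -/
lemma isSMulRegular_quotient_iff_mem {R : Type*} [CommRing R] (I : Ideal R) (a : R) :
    IsSMulRegular (R ⧸ I) a ↔ ∀ x : R, a * x ∈ I → x ∈ I := by
  constructor
  · intro h x hx
    have : (a : R) • (Ideal.Quotient.mk I x) = a • (0 : R ⧸ I) := by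
      rw [smul_zero]
      show (Ideal.Quotient.mk I) a * (Ideal.Quotient.mk I) x = 0
      rw [← map_mul, Ideal.Quotient.eq_zero_iff_mem]
      exact hx
    have := h this
    rwa [Ideal.Quotient.eq_zero_iff_mem] at this
  · intro h x y hxy
    obtain ⟨x, rfl⟩ := Ideal.Quotient.mk_surjective x
    obtain ⟨y, rfl⟩ := Ideal.Quotient.mk_surjective y
    have hxy' : Ideal.Quotient.mk I (a * x) = Ideal.Quotient.mk I (a * y) := hxy
    rw [Ideal.Quotient.eq] at hxy' ⊢
    have : a * (x - y) ∈ I := by rw [mul_sub]; exact hxy'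
    exact h _ this

/-- Let `R` be a commutative Noetherian ring, `J ⊆ R` an ideal, `g ∈ R`, and
`a ∈ R` a nonzerodivisor on `R/(J + (g))`.  Then `a` is a nonzerodivisor on `R/J` if and only
if `a` is a nonzerodivisor on `R/(J : g)`. -/
theorem isSMulRegular_quotient_iff_of_isSMulRegular_quotient_sup
    {R : Type*} [CommRing R] [IsNoetherianRing R] (J : Ideal R) (g a : R)
    (ha : IsSMulRegular (R ⧸ (J ⊔ Ideal.span {g})) a) :
    IsSMulRegular (R ⧸ J) a ↔ IsSMulRegular (R ⧸ J.colon (Ideal.span {g})) a := by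
  rw [isSMulRegular_quotient_iff_mem] at ha ⊢
  rw [isSMulRegular_quotient_iff_mem]
  constructor
  · intro h x hx
    rw [Ideal.mem_colon_span_singleton] at hx ⊢
    have : a * (x * g) ∈ J := by rw [← mul_assoc]; exact hx
    exact h _ this
  · intro h x hx
    have hx' : x ∈ J ⊔ Ideal.span {g} := by
      apply ha
      exact Ideal.mem_sup_left hx
    rw [Submodule.mem_sup] at hx'
    obtain ⟨j, hj, z, hz, hx'⟩ := hx'
    rw [Ideal.mem_span_singleton] at hz
    obtain ⟨r, rfl⟩ := hz
    have harg : a * (r * g) ∈ J := by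
      have hj' : a * j ∈ J := Ideal.mul_mem_left _ _ hj
      have : a * (r * g) = a * x - a * j := by rw [← hx']; ring
      rw [this]
      exact Ideal.sub_mem _ hx hj'
    have hr : r ∈ J.colon (Ideal.span {g}) := by
      apply h
      rw [Ideal.mem_colon_span_singleton, mul_assoc]
      exact harg
    rw [Ideal.mem_colon_span_singleton] at hr
    rw [← hx']
    have : g * r = r * g := mul_comm _ _
    exact Ideal.add_mem _ hj (by rw [this]; exact hr)
end

section
/- Let I be an equigenerated monomial ideal of degree d in a polynomial ring R over a field, with a linear presentation (all first syzygies of I are linear). Suppose I = J + K for monomial ideals J and K such that K has no linear first syzygies among its minimal generators, i.e., β_{1,d+1}(K) = 0, and write G(K) = {g₁, …, g_t}. Then (J + (g₁, …, g_i)) : g_{i+1} = J : g_{i+1} for all i = 0, …, t−1. -/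
open MvPolynomial

/-- The total degree of an exponent vector. -/
def degSum {σ : Type*} (a : σ →₀ ℕ) : ℕ := a.sum fun _ e => e

section Aux

variable {σ k : Type*} [Field k]

/-- Forward direction of monomial ideal membership: every monomial of an element of a
monomial ideal is divisible by a generator's exponent. -/
theorem exists_div_of_mem_span {G : Set (σ →₀ ℕ)} {q : MvPolynomial σ k}
    (hq : q ∈ Ideal.span ((fun g => monomial g (1 : k)) '' G)) :
    ∀ m ∈ q.support, ∃ g ∈ G, g ≤ m := by
  classical
  let M : Ideal (MvPolynomial σ k) :=
    { carrier := {p | ∀ m ∈ p.support, ∃ g ∈ G, g ≤ m}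
      zero_mem' := by simp
      add_mem' := by
        intro a b ha hb m hm
        rcases Finset.mem_union.mp (MvPolynomial.support_add hm) with h | h
        exacts [ha m h, hb m h]
      smul_mem' := by
        intro c p hp m hm
        rw [smul_eq_mul] at hm
        obtain ⟨b1, hb1, b2, hb2, hb⟩ := Finset.mem_add.mp (MvPolynomial.support_mul c p hm)
        obtain ⟨g, hg, hgle⟩ := hp b2 hb2
        exact ⟨g, hg, hgle.trans (hb ▸ (le_add_self : b2 ≤ b1 + b2))⟩ }
  have : q ∈ M := by
    refine Ideal.span_le.mpr ?_ hq
    rintro x ⟨g, hg, rfl⟩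
    intro m hm
    rw [MvPolynomial.support_monomial, if_neg (one_ne_zero)] at hm
    exact ⟨g, hg, (Finset.mem_singleton.mp hm).ge⟩
  exact this

theorem monomial_mem_span {G : Set (σ →₀ ℕ)} {m : σ →₀ ℕ} (c : k) {g : σ →₀ ℕ}
    (hg : g ∈ G) (hle : g ≤ m) :
    monomial m c ∈ Ideal.span ((fun g => monomial g (1 : k)) '' G) := by
  have h : monomial m c = monomial (m - g) c * monomial g 1 := by
    rw [monomial_mul, mul_one, tsub_add_cancel_of_le hle]
  rw [h]
  exact Ideal.mul_mem_left _ _ (Ideal.subset_span ⟨g, hg, rfl⟩)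

/-- linearCombination as a fintype sum -/
theorem lc_eq_sum {n : Type*} [Fintype n] (g : n → (σ →₀ ℕ)) (x : n →₀ MvPolynomial σ k) :
    Finsupp.linearCombination (MvPolynomial σ k) (fun i => monomial (g i) (1 : k)) x
      = ∑ u : n, x u * monomial (g u) (1 : k) := by
  rw [Finsupp.linearCombination_apply, Finsupp.sum_fintype]
  · simp [smul_eq_mul]
  · intro i; simp

end Aux

section Main

variable {σ k : Type*} [Field k] {rj t : ℕ}

/-- Key step: if `x^{g w}` divides `x^{b} x^{gK v}` for some generator index `w ≠ inr v`,
then some generator of `J` divides it. -/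
theorem main_div
    (gJ : Fin rj → (σ →₀ ℕ)) (gK : Fin t → (σ →₀ ℕ))
    (hlinpres :
      Submodule.span (MvPolynomial σ k)
        {x : (Fin rj ⊕ Fin t) →₀ MvPolynomial σ k |
          x ∈ LinearMap.ker (Finsupp.linearCombination (MvPolynomial σ k)
            fun i : Fin rj ⊕ Fin t => monomial (Sum.elim gJ gK i) (1 : k)) ∧
          ∀ i, (x i).IsHomogeneous 1} =
      LinearMap.ker (Finsupp.linearCombination (MvPolynomial σ k)
        fun i : Fin rj ⊕ Fin t => monomial (Sum.elim gJ gK i) (1 : k)))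
    (hKnolin : ∀ x : Fin t →₀ MvPolynomial σ k,
      x ∈ LinearMap.ker (Finsupp.linearCombination (MvPolynomial σ k)
        fun i : Fin t => monomial (gK i) (1 : k)) →
      (∀ i, (x i).IsHomogeneous 1) → x = 0)
    (v : Fin t) (w : Fin rj ⊕ Fin t) (hw : w ≠ Sum.inr v)
    (b : σ →₀ ℕ) (hle : Sum.elim gJ gK w ≤ b + gK v) :
    ∃ u : Fin rj, gJ u ≤ b + gK v := by
  classical
  by_contra hC
  push_neg at hC
  set g : Fin rj ⊕ Fin t → (σ →₀ ℕ) := Sum.elim gJ gK with hg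
  set T := Finsupp.linearCombination (MvPolynomial σ k)
      (fun i : Fin rj ⊕ Fin t => monomial (g i) (1 : k)) with hT
  -- Sub-claim: every linear syzygy has v-coordinate with no monomial ≤ b.
  have subclaim : ∀ x : (Fin rj ⊕ Fin t) →₀ MvPolynomial σ k, T x = 0 →
      (∀ i, (x i).IsHomogeneous 1) → ∀ m' ≤ b, coeff m' (x (Sum.inr v)) = 0 := by
    intro x hxker hxhom m' hm'b
    by_contra hne
    set m : σ →₀ ℕ := m' + gK v with hm
    have hmb : m ≤ b + gK v := add_le_add hm'b le_rfl
    -- component of x in multidegree m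
    set y : (Fin rj ⊕ Fin t) →₀ MvPolynomial σ k :=
      Finsupp.equivFunOnFinite.symm (fun u =>
        if g u ≤ m then monomial (m - g u) (coeff (m - g u) (x u)) else 0) with hy
    have hyapp : ∀ u, y u = if g u ≤ m then monomial (m - g u) (coeff (m - g u) (x u)) else 0 := by
      intro u; rw [hy]; exact rfl
    -- y is in the kernel
    have hyker : T y = 0 := by
      have hc : (∑ u : Fin rj ⊕ Fin t,
          if g u ≤ m then coeff (m - g u) (x u) else 0) = 0 := by
        have := congrArg (coeff m) hxker
        rw [hT, lc_eq_sum] at this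
        simpa [MvPolynomial.coeff_sum, coeff_mul_monomial'] using this
      rw [hT, lc_eq_sum]
      have : ∀ u : Fin rj ⊕ Fin t, y u * monomial (g u) (1 : k)
          = monomial m (if g u ≤ m then coeff (m - g u) (x u) else 0) := by
        intro u
        rw [hyapp u]
        split_ifs with h
        · rw [monomial_mul, mul_one, tsub_add_cancel_of_le h]
        · simp
      simp_rw [this]
      rw [← map_sum, hc, map_zero]
    -- J-coordinates of y vanish
    have hyJ : ∀ u : Fin rj, y (Sum.inl u) = 0 := by
      intro u
      rw [hyapp]
      rw [if_neg]
      intro hcon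
      exact hC u (le_trans (by simpa [hg] using hcon) hmb)
    -- restrict to K and apply hKnolin
    set z : Fin t →₀ MvPolynomial σ k :=
      Finsupp.equivFunOnFinite.symm (fun j => y (Sum.inr j)) with hz
    have hzapp : ∀ j, z j = y (Sum.inr j) := by
      intro j; rw [hz]; exact rfl
    have hzker : Finsupp.linearCombination (MvPolynomial σ k)
        (fun i : Fin t => monomial (gK i) (1 : k)) z = 0 := by
      rw [lc_eq_sum]
      have := hyker
      rw [hT, lc_eq_sum, Fintype.sum_sum_type] at this
      simp only [hyJ, zero_mul, Finset.sum_const_zero, zero_add] at this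
      simpa [hzapp, hg] using this
    have hzhom : ∀ j, (z j).IsHomogeneous 1 := by
      intro j
      rw [hzapp, hyapp]
      split_ifs with h
      · by_cases hc0 : coeff (m - g (Sum.inr j)) (x (Sum.inr j)) = 0
        · rw [hc0, map_zero]; exact isHomogeneous_zero σ k 1
        · refine isHomogeneous_monomial _ ?_
          by_contra hd
          exact hc0 ((hxhom (Sum.inr j)).coeff_eq_zero hd)
      · exact isHomogeneous_zero σ k 1
    have hz0 := hKnolin z hzker hzhom
    -- but z v ≠ 0
    have : z v ≠ 0 := by
      rw [hzapp, hyapp]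
      have hgvm : g (Sum.inr v) ≤ m := by
        simp only [hg, Sum.elim_inr, hm]
        exact le_add_self
      rw [if_pos hgvm]
      have hmv : m - g (Sum.inr v) = m' := by
        simp only [hg, Sum.elim_inr, hm]
        ext s; simp
      rw [hmv]
      simpa [MvPolynomial.monomial_eq_zero] using hne
    rw [hz0] at this
    simp at this
  -- The submodule of elements whose v-coordinate has no monomial ≤ b
  set M : Submodule (MvPolynomial σ k) ((Fin rj ⊕ Fin t) →₀ MvPolynomial σ k) :=
    { carrier := {x | ∀ m' ≤ b, coeff m' (x (Sum.inr v)) = 0}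
      zero_mem' := by intro m' _; simp
      add_mem' := by
        intro a b' ha hb' m' hm'
        rw [Finsupp.add_apply, MvPolynomial.coeff_add, ha m' hm', hb' m' hm', add_zero]
      smul_mem' := by
        intro c x hx m' hm'
        rw [Finsupp.smul_apply, smul_eq_mul, MvPolynomial.coeff_mul]
        refine Finset.sum_eq_zero fun p hp => ?_
        have hp2 : p.2 ≤ m' := by
          rw [Finset.HasAntidiagonal.mem_antidiagonal] at hp
          exact hp ▸ (le_add_self : p.2 ≤ p.1 + p.2)
        rw [hx p.2 (hp2.trans hm'), mul_zero] } with hM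
  -- the Taylor syzygy between v and w
  set s : (Fin rj ⊕ Fin t) →₀ MvPolynomial σ k :=
    Finsupp.single (Sum.inr v) (monomial b (1 : k))
      - Finsupp.single w (monomial (b + gK v - g w) (1 : k)) with hs
  have hsker : T s = 0 := by
    have hww : b + gK v - g w + g w = b + gK v := tsub_add_cancel_of_le hle
    rw [hs, map_sub, hT, Finsupp.linearCombination_single, Finsupp.linearCombination_single,
      smul_eq_mul, smul_eq_mul, monomial_mul, monomial_mul, hww]
    simp [hg]
  have hsM : s ∈ M := by
    have hspan : s ∈ Submodule.span (MvPolynomial σ k)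
        {x : (Fin rj ⊕ Fin t) →₀ MvPolynomial σ k |
          x ∈ LinearMap.ker T ∧ ∀ i, (x i).IsHomogeneous 1} := by
      rw [hT, hlinpres]
      exact hsker
    refine Submodule.span_le.mpr ?_ hspan
    rintro x ⟨hker, hhom⟩
    exact fun m' hm' => subclaim x hker hhom m' hm'
  have := hsM b (le_refl b)
  rw [hs, Finsupp.sub_apply, Finsupp.single_eq_same, Finsupp.single_eq_of_ne' hw, sub_zero,
    MvPolynomial.coeff_monomial, if_pos rfl] at this
  exact one_ne_zero this

end Main

/-- Let `I = J + K` be an equigenerated monomial ideal of degree `d`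
with a linear presentation, where `J`, `K` are monomial ideals with minimal monomial
generators `x^{gJ i}` and `x^{gK i}` respectively, and `β_{1,d+1}(K) = 0` (no linear
syzygies among the minimal generators of `K`).  Then
`(J + (g₁, …, g_i)) : g_{i+1} = J : g_{i+1}` for all `i = 0, …, t-1`. -/
theorem colon_sup_eq_colon_of_linearly_presented
    {σ : Type*} (k : Type*) [Field k] (d : ℕ) (rj t : ℕ)
    (gJ : Fin rj → (σ →₀ ℕ)) (gK : Fin t → (σ →₀ ℕ))
    -- `I` is equigenerated of degree `d`:
    (hdJ : ∀ i, degSum (gJ i) = d) (hdK : ∀ i, degSum (gK i) = d)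
    -- the listed monomials minimally generate `I = J + K` (no divisibilities):
    (hmin : ∀ i j : Fin rj ⊕ Fin t, i ≠ j →
      ¬ Sum.elim gJ gK i ≤ Sum.elim gJ gK j)
    -- `I` is linearly presented: the syzygies of the `x^{g i}` are spanned by the linear ones:
    (hlinpres :
      Submodule.span (MvPolynomial σ k)
        {x : (Fin rj ⊕ Fin t) →₀ MvPolynomial σ k |
          x ∈ LinearMap.ker (Finsupp.linearCombination (MvPolynomial σ k)
            fun i : Fin rj ⊕ Fin t => monomial (Sum.elim gJ gK i) (1 : k)) ∧
          ∀ i, (x i).IsHomogeneous 1} =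
      LinearMap.ker (Finsupp.linearCombination (MvPolynomial σ k)
        fun i : Fin rj ⊕ Fin t => monomial (Sum.elim gJ gK i) (1 : k)))
    -- `β_{1,d+1}(K) = 0`: `K` has no linear syzygies among its minimal generators:
    (hKnolin : ∀ x : Fin t →₀ MvPolynomial σ k,
      x ∈ LinearMap.ker (Finsupp.linearCombination (MvPolynomial σ k)
        fun i : Fin t => monomial (gK i) (1 : k)) →
      (∀ i, (x i).IsHomogeneous 1) → x = 0) :
    ∀ i : Fin t,
      ((Ideal.span (Set.range fun j => monomial (gJ j) (1 : k)) ⊔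
          Ideal.span {q | ∃ j : Fin t, j < i ∧ q = monomial (gK j) (1 : k)}).colon
        (Ideal.span {monomial (gK i) (1 : k)})) =
      (Ideal.span (Set.range fun j => monomial (gJ j) (1 : k))).colon
        (Ideal.span {monomial (gK i) (1 : k)}) := by
  classical
  intro i
  apply le_antisymm
  · intro f hf
    rw [Ideal.mem_colon_span_singleton] at hf ⊢
    have hJset : (Set.range fun j => monomial (gJ j) (1 : k))
        = (fun g => monomial g (1 : k)) '' Set.range gJ := by
      rw [← Set.range_comp]; rfl
    have hKset : {q | ∃ j : Fin t, j < i ∧ q = monomial (gK j) (1 : k)}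
        = (fun g => monomial g (1 : k)) '' {e | ∃ j : Fin t, j < i ∧ e = gK j} := by
      ext q
      constructor
      · rintro ⟨j, hj, rfl⟩; exact ⟨gK j, ⟨j, hj, rfl⟩, rfl⟩
      · rintro ⟨e, ⟨j, hj, rfl⟩, rfl⟩; exact ⟨j, hj, rfl⟩
    set G : Set (σ →₀ ℕ) := Set.range gJ ∪ {e | ∃ j : Fin t, j < i ∧ e = gK j} with hG
    have hsup : Ideal.span (Set.range fun j => monomial (gJ j) (1 : k)) ⊔
        Ideal.span {q | ∃ j : Fin t, j < i ∧ q = monomial (gK j) (1 : k)}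
        = Ideal.span ((fun g => monomial g (1 : k)) '' G) := by
      rw [hG, Set.image_union, Ideal.span_union, hJset, hKset]
    rw [hsup] at hf
    have hdiv := exists_div_of_mem_span hf
    set q := f * monomial (gK i) (1 : k) with hq
    have hsupp : ∀ m ∈ q.support, ∃ bb ∈ f.support, bb + gK i = m := by
      intro m hm
      have hmm := MvPolynomial.support_mul f (monomial (gK i) (1 : k)) hm
      obtain ⟨b1, hb1, b2, hb2, hb⟩ := Finset.mem_add.mp hmm
      rw [MvPolynomial.support_monomial, if_neg one_ne_zero, Finset.mem_singleton] at hb2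
      exact ⟨b1, hb1, by rw [hb2] at hb; exact hb⟩
    rw [hJset, ← MvPolynomial.support_sum_monomial_coeff q]
    refine Ideal.sum_mem _ fun m hm => ?_
    obtain ⟨g0, hg0, hg0le⟩ := hdiv m hm
    rcases hg0 with ⟨u, rfl⟩ | ⟨j, hj, rfl⟩
    · exact monomial_mem_span _ ⟨u, rfl⟩ hg0le
    · obtain ⟨bb, _, rfl⟩ := hsupp m hm
      obtain ⟨u, hu⟩ := main_div gJ gK hlinpres hKnolin i (Sum.inr j)
        (fun h => absurd (Sum.inr.inj h) (Fin.ne_of_lt hj)) bb hg0le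
      exact monomial_mem_span _ ⟨u, rfl⟩ hu
  · exact Submodule.colon_mono le_sup_left (le_refl _)
end

section
/- Let R be a polynomial ring over a field and let I be a linearly presented, equigenerated monomial ideal of degree d, with I = J + K where J, K are monomial ideals and β_{1,d+1}(K) = 0. Let a ∈ R be an element regular on R/I. Then a is regular on R/J if and only if a is regular on R/(J : g) for every g in the minimal generating set G(K) of K. -/
open MvPolynomial

section Aux

variable {σ k : Type*} [Field k]

lemma regQuotIff (L : Ideal (MvPolynomial σ k)) (a : MvPolynomial σ k) :
    IsSMulRegular (MvPolynomial σ k ⧸ L) a ↔ ∀ x, a * x ∈ L → x ∈ L := by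
  constructor
  · intro h x hx
    have h1 : a • (Ideal.Quotient.mk L x) = a • (0 : MvPolynomial σ k ⧸ L) := by
      rw [smul_zero]
      show Ideal.Quotient.mk L (a * x) = 0
      rwa [Ideal.Quotient.eq_zero_iff_mem]
    have h2 := h h1
    rwa [Ideal.Quotient.eq_zero_iff_mem] at h2
  · intro h u v huv
    obtain ⟨x, rfl⟩ := Ideal.Quotient.mk_surjective u
    obtain ⟨y, rfl⟩ := Ideal.Quotient.mk_surjective v
    have h1 : Ideal.Quotient.mk L (a * x) = Ideal.Quotient.mk L (a * y) := huv
    rw [Ideal.Quotient.mk_eq_mk_iff_sub_mem] at h1 ⊢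
    rw [← mul_sub] at h1
    exact h _ h1

/-- Key lemma: the lcm of two distinct minimal generators of `K` lies in `J`. -/
lemma lcm_mem_J (rj t : ℕ) (gJ : Fin rj → (σ →₀ ℕ)) (gK : Fin t → (σ →₀ ℕ))
    (hlinpres :
      Submodule.span (MvPolynomial σ k)
        {x : (Fin rj ⊕ Fin t) →₀ MvPolynomial σ k |
          x ∈ LinearMap.ker (Finsupp.linearCombination (MvPolynomial σ k)
            fun i : Fin rj ⊕ Fin t => monomial (Sum.elim gJ gK i) (1 : k)) ∧
          ∀ i, (x i).IsHomogeneous 1} =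
      LinearMap.ker (Finsupp.linearCombination (MvPolynomial σ k)
        fun i : Fin rj ⊕ Fin t => monomial (Sum.elim gJ gK i) (1 : k)))
    (hKnolin : ∀ x : Fin t →₀ MvPolynomial σ k,
      x ∈ LinearMap.ker (Finsupp.linearCombination (MvPolynomial σ k)
        fun i : Fin t => monomial (gK i) (1 : k)) →
      (∀ i, (x i).IsHomogeneous 1) → x = 0)
    {i j : Fin t} (hij : i ≠ j) :
    monomial (gK i ⊔ gK j) (1 : k) ∈
      Ideal.span (Set.range fun p => monomial (gJ p) (1 : k)) := by
  classical
  set c : σ →₀ ℕ := gK i ⊔ gK j with hc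
  set u : Fin rj ⊕ Fin t → (σ →₀ ℕ) := Sum.elim gJ gK with hu
  -- it suffices to find p with gJ p ≤ c
  suffices hex : ∃ p, gJ p ≤ c by
    obtain ⟨p, hp⟩ := hex
    have : (Set.range fun p => monomial (gJ p) (1 : k)) =
        (fun e => monomial e (1 : k)) '' Set.range gJ := by
      rw [← Set.range_comp]; rfl
    rw [this, mem_ideal_span_monomial_image]
    intro xi hxi
    rw [support_monomial, if_neg one_ne_zero, Finset.mem_singleton] at hxi
    exact ⟨gJ p, Set.mem_range_self p, hxi ▸ hp⟩
  by_contra Hex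
  push_neg at Hex
  have lc_eq : ∀ (w : (Fin rj ⊕ Fin t) →₀ MvPolynomial σ k),
      (Finsupp.linearCombination (MvPolynomial σ k)
        fun l : Fin rj ⊕ Fin t => monomial (u l) (1 : k)) w
        = ∑ l, w l • monomial (u l) (1 : k) := fun w => by
    rw [Finsupp.linearCombination_apply]
    exact Finsupp.sum_fintype _ _ (fun _ => zero_smul _ _)
  have lcK_eq : ∀ (w : Fin t →₀ MvPolynomial σ k),
      (Finsupp.linearCombination (MvPolynomial σ k)
        fun m : Fin t => monomial (gK m) (1 : k)) w
        = ∑ m, w m • monomial (gK m) (1 : k) := fun w => by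
    rw [Finsupp.linearCombination_apply]
    exact Finsupp.sum_fintype _ _ (fun _ => zero_smul _ _)
  -- the Taylor syzygy
  set s : (Fin rj ⊕ Fin t) →₀ MvPolynomial σ k :=
    Finsupp.single (Sum.inr i) (monomial (c - gK i) (1 : k)) -
    Finsupp.single (Sum.inr j) (monomial (c - gK j) (1 : k)) with hs
  have hsker : s ∈ LinearMap.ker (Finsupp.linearCombination (MvPolynomial σ k)
      fun l : Fin rj ⊕ Fin t => monomial (u l) (1 : k)) := by
    rw [LinearMap.mem_ker, hs, map_sub, Finsupp.linearCombination_single,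
      Finsupp.linearCombination_single, smul_eq_mul, smul_eq_mul, monomial_mul,
      monomial_mul]
    have h1 : c - gK i + gK i = c := tsub_add_cancel_of_le le_sup_left
    have h2 : c - gK j + gK j = c := tsub_add_cancel_of_le le_sup_right
    simp only [Sum.elim_inr, hu]
    rw [h1, h2, sub_self]
  rw [← hlinpres] at hsker
  -- the multigraded vanishing predicate
  have key : ∀ c' ≤ c, ∀ l, u l ≤ c' → coeff (c' - u l) (s l) = 0 := by
    refine Submodule.span_induction ?_ ?_ ?_ ?_ hsker
    · -- generators: componentwise-linear syzygies
      rintro y ⟨hyker, hyhom⟩ c' hc' l hl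
      rcases l with p | m
      · exact absurd (le_trans hl hc') (Hex p)
      · -- build the corresponding linear syzygy of K
        set f : Fin t → MvPolynomial σ k := fun m' =>
          if h : gK m' ≤ c' then
            monomial (c' - gK m') (coeff (c' - gK m') (y (Sum.inr m'))) else 0 with hf
        set z : Fin t →₀ MvPolynomial σ k := Finsupp.equivFunOnFinite.symm f with hz
        have hzapp : ∀ m', z m' = f m' := fun m' => rfl
        have hcoeffsum : ∑ m' : Fin t,
            (if gK m' ≤ c' then coeff (c' - gK m') (y (Sum.inr m')) else 0) = 0 := by
          have hy0 : ∑ l, y l • monomial (u l) (1 : k) = 0 := by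
            rw [← lc_eq]; exact hyker
          have hcoeff := congrArg (coeff c') hy0
          rw [coeff_zero, MvPolynomial.coeff_sum, Fintype.sum_sum_type] at hcoeff
          simp only [hu, Sum.elim_inl, Sum.elim_inr] at hcoeff
          have hJ0 : ∀ p : Fin rj,
              coeff c' (y (Sum.inl p) • monomial (gJ p) (1 : k)) = 0 := by
            intro p
            rw [smul_eq_mul, coeff_mul_monomial']
            exact if_neg (fun hle => Hex p (le_trans hle hc'))
          rw [Finset.sum_congr rfl (fun p _ => hJ0 p), Finset.sum_const_zero,
            zero_add] at hcoeff
          have hstep : ∀ m' : Fin t, coeff c' (y (Sum.inr m') • monomial (gK m') (1 : k))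
              = if gK m' ≤ c' then coeff (c' - gK m') (y (Sum.inr m')) else 0 := by
            intro m'
            rw [smul_eq_mul, coeff_mul_monomial']
            by_cases h : gK m' ≤ c'
            · rw [if_pos h, if_pos h, mul_one]
            · rw [if_neg h, if_neg h]
          rw [Finset.sum_congr rfl (fun m' _ => hstep m')] at hcoeff
          exact hcoeff
        have hzker : z ∈ LinearMap.ker (Finsupp.linearCombination (MvPolynomial σ k)
            fun m : Fin t => monomial (gK m) (1 : k)) := by
          rw [LinearMap.mem_ker, lcK_eq]
          have : ∀ m' : Fin t, z m' • monomial (gK m') (1 : k) =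
              monomial c' (if gK m' ≤ c' then coeff (c' - gK m') (y (Sum.inr m')) else 0) := by
            intro m'
            rw [hzapp, hf, smul_eq_mul]
            dsimp only
            by_cases h : gK m' ≤ c'
            · rw [dif_pos h, if_pos h, monomial_mul, mul_one, tsub_add_cancel_of_le h]
            · rw [dif_neg h, if_neg h, zero_mul, monomial_zero]
          rw [Finset.sum_congr rfl (fun m' _ => this m'), ← map_sum, hcoeffsum,
            monomial_zero]
        have hzhom : ∀ m', (z m').IsHomogeneous 1 := by
          intro m'
          rw [hzapp, hf]
          dsimp only
          by_cases h : gK m' ≤ c'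
          · rw [dif_pos h]
            by_cases h0 : coeff (c' - gK m') (y (Sum.inr m')) = 0
            · rw [h0, monomial_zero]; exact isHomogeneous_zero _ _ _
            · refine isHomogeneous_monomial _ ?_
              have := hyhom (Sum.inr m') h0
              rwa [Finsupp.degree_eq_weight_one]
          · rw [dif_neg h]; exact isHomogeneous_zero _ _ _
        have hz0 := hKnolin z hzker hzhom
        have : f m = 0 := by rw [← hzapp, hz0]; rfl
        rw [hf] at this
        dsimp only at this
        simp only [Sum.elim_inr, hu] at hl ⊢
        rw [dif_pos hl] at this
        exact (MvPolynomial.monomial_eq_zero).mp this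
    · intro c' _ l _
      simp
    · intro x y _ _ hx hy c' hc' l hl
      rw [Finsupp.add_apply, coeff_add, hx c' hc' l hl, hy c' hc' l hl, add_zero]
    · intro r x _ hx c' hc' l hl
      rw [Finsupp.smul_apply, smul_eq_mul, MvPolynomial.coeff_mul]
      refine Finset.sum_eq_zero (fun bp hbp => ?_)
      rw [Finset.HasAntidiagonal.mem_antidiagonal] at hbp
      have h1 : (c' - u l) + u l = c' := tsub_add_cancel_of_le hl
      have h2 : c' = bp.1 + (bp.2 + u l) := by
        rw [← h1, ← hbp, add_assoc]
      have h3 : u l ≤ c' - bp.1 := by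
        rw [h2, add_tsub_cancel_left]; exact le_add_self
      have h4 : (c' - bp.1) - u l = bp.2 := by
        rw [h2, add_tsub_cancel_left, add_tsub_cancel_right]
      have h5 : c' - bp.1 ≤ c := le_trans tsub_le_self hc'
      rw [← h4]
      rw [hx (c' - bp.1) h5 l h3, mul_zero]
  -- contradiction
  have hfin := key c le_rfl (Sum.inr i) le_sup_left
  rw [hs] at hfin
  simp only [hu, Sum.elim_inr] at hfin
  rw [Finsupp.sub_apply, Finsupp.single_eq_same,
    Finsupp.single_eq_of_ne' (fun h => hij (Sum.inr.inj h).symm), sub_zero,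
    coeff_monomial, if_pos rfl] at hfin
  exact one_ne_zero hfin


/-- Colon-killing step: if `w·x^{gK i}` lies in `J + (gK j : j ≠ i)`, then it lies in `J`. -/
lemma colon_step (rj t : ℕ) (gJ : Fin rj → (σ →₀ ℕ)) (gK : Fin t → (σ →₀ ℕ))
    (hB : ∀ i j : Fin t, i ≠ j → monomial (gK i ⊔ gK j) (1 : k) ∈
      Ideal.span (Set.range fun p => monomial (gJ p) (1 : k)))
    (i : Fin t) (w : MvPolynomial σ k)
    (hw : w * monomial (gK i) (1 : k) ∈ Ideal.span
      ((fun e => monomial e (1 : k)) '' (Set.range gJ ∪ gK '' {j | j ≠ i}))) :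
    w * monomial (gK i) (1 : k) ∈
      Ideal.span (Set.range fun p => monomial (gJ p) (1 : k)) := by
  classical
  have hJeq : (Set.range fun p => monomial (gJ p) (1 : k)) =
      (fun e => monomial e (1 : k)) '' Set.range gJ := by
    rw [← Set.range_comp]; rfl
  rw [hJeq, mem_ideal_span_monomial_image]
  rw [mem_ideal_span_monomial_image] at hw
  intro ξ hξ
  have hξi : gK i ≤ ξ := by
    by_contra hcon
    rw [mem_support_iff, coeff_mul_monomial', if_neg hcon] at hξ
    exact hξ rfl
  obtain ⟨η, hη, hle⟩ := hw ξ hξ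
  rcases hη with ⟨p, rfl⟩ | ⟨j, hj, rfl⟩
  · exact ⟨gJ p, Set.mem_range_self p, hle⟩
  · have hsup : gK i ⊔ gK j ≤ ξ := sup_le hξi hle
    have hmem := hB i j (fun h => hj (h ▸ rfl))
    rw [hJeq, mem_ideal_span_monomial_image] at hmem
    obtain ⟨η', hη', hle'⟩ := hmem (gK i ⊔ gK j)
      (by rw [support_monomial, if_neg one_ne_zero]; exact Finset.mem_singleton_self _)
    exact ⟨η', hη', le_trans hle' hsup⟩

end Aux

/-- Let `I = J + K` be a linearly presented, equigenerated monomial ideal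
of degree `d` in a polynomial ring `R` over a field, where `J`, `K` are monomial ideals
with minimal generators `x^{gJ i}`, `x^{gK i}` and `β_{1,d+1}(K) = 0`.  Let `a ∈ R` be
regular on `R/I`.  Then `a` is regular on `R/J` if and only if `a` is regular on
`R/(J : g)` for every minimal generator `g` of `K`. -/
theorem isSMulRegular_quotient_iff_forall_colon
    {σ : Type*} (k : Type*) [Field k] (d : ℕ) (rj t : ℕ)
    (gJ : Fin rj → (σ →₀ ℕ)) (gK : Fin t → (σ →₀ ℕ))
    (hdJ : ∀ i, degSum (gJ i) = d) (hdK : ∀ i, degSum (gK i) = d)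
    (hmin : ∀ i j : Fin rj ⊕ Fin t, i ≠ j →
      ¬ Sum.elim gJ gK i ≤ Sum.elim gJ gK j)
    (hlinpres :
      Submodule.span (MvPolynomial σ k)
        {x : (Fin rj ⊕ Fin t) →₀ MvPolynomial σ k |
          x ∈ LinearMap.ker (Finsupp.linearCombination (MvPolynomial σ k)
            fun i : Fin rj ⊕ Fin t => monomial (Sum.elim gJ gK i) (1 : k)) ∧
          ∀ i, (x i).IsHomogeneous 1} =
      LinearMap.ker (Finsupp.linearCombination (MvPolynomial σ k)
        fun i : Fin rj ⊕ Fin t => monomial (Sum.elim gJ gK i) (1 : k)))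
    (hKnolin : ∀ x : Fin t →₀ MvPolynomial σ k,
      x ∈ LinearMap.ker (Finsupp.linearCombination (MvPolynomial σ k)
        fun i : Fin t => monomial (gK i) (1 : k)) →
      (∀ i, (x i).IsHomogeneous 1) → x = 0)
    (a : MvPolynomial σ k)
    -- `a` is regular on `R/I`, where `I = J + K`:
    (ha : IsSMulRegular
      (MvPolynomial σ k ⧸
        (Ideal.span (Set.range fun j => monomial (gJ j) (1 : k)) ⊔
          Ideal.span (Set.range fun j => monomial (gK j) (1 : k)))) a) :
    IsSMulRegular
        (MvPolynomial σ k ⧸ Ideal.span (Set.range fun j => monomial (gJ j) (1 : k))) a ↔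
      ∀ i : Fin t, IsSMulRegular
        (MvPolynomial σ k ⧸
          (Ideal.span (Set.range fun j => monomial (gJ j) (1 : k))).colon
            (Ideal.span {monomial (gK i) (1 : k)})) a := by
  classical
  set Jid : Ideal (MvPolynomial σ k) :=
    Ideal.span (Set.range fun p => monomial (gJ p) (1 : k)) with hJid
  rw [regQuotIff]
  constructor
  · -- easy direction
    intro hJ i
    rw [regQuotIff]
    intro x hx
    rw [Ideal.mem_colon_span_singleton] at hx ⊢
    rw [mul_assoc] at hx
    exact hJ _ hx
  · intro hcol
    intro x hx
    -- x ∈ I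
    have hB : ∀ i j : Fin t, i ≠ j → monomial (gK i ⊔ gK j) (1 : k) ∈ Jid :=
      fun i j hij => lcm_mem_J rj t gJ gK hlinpres hKnolin hij
    have haI := (regQuotIff _ a).mp ha
    have hxI : x ∈ Jid ⊔ Ideal.span (Set.range fun q => monomial (gK q) (1 : k)) :=
      haI x (Submodule.mem_sup_left hx)
    have hsup : Jid ⊔ Ideal.span (Set.range fun q => monomial (gK q) (1 : k)) =
        Ideal.span (Set.range fun l : Fin rj ⊕ Fin t =>
          monomial (Sum.elim gJ gK l) (1 : k)) := by
      rw [hJid, ← Ideal.span_union]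
      congr 1
      have : (fun l : Fin rj ⊕ Fin t => monomial (Sum.elim gJ gK l) (1 : k)) =
          Sum.elim (fun p => monomial (gJ p) (1 : k)) (fun q => monomial (gK q) (1 : k)) := by
        funext l; cases l <;> rfl
      rw [this, Set.Sum.elim_range]
    rw [hsup] at hxI
    obtain ⟨cfs, hcfs⟩ := Ideal.mem_span_range_iff_exists_fun.mp hxI
    -- each K-part coefficient term lies in J
    have hterm : ∀ i : Fin t, cfs (Sum.inr i) * monomial (gK i) (1 : k) ∈ Jid := by
      intro i
      set Ai : Set (σ →₀ ℕ) := Set.range gJ ∪ gK '' {j | j ≠ i} with hAi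
      have hJsub : Jid ≤ Ideal.span ((fun e => monomial e (1 : k)) '' Ai) := by
        rw [hJid]
        have : (Set.range fun p => monomial (gJ p) (1 : k)) =
            (fun e => monomial e (1 : k)) '' Set.range gJ := by
          rw [← Set.range_comp]; rfl
        rw [this]
        exact Ideal.span_mono (Set.image_mono Set.subset_union_left)
      have h1 : a * (cfs (Sum.inr i) * monomial (gK i) (1 : k)) ∈
          Ideal.span ((fun e => monomial e (1 : k)) '' Ai) := by
        have hsplit : a * (cfs (Sum.inr i) * monomial (gK i) (1 : k)) =
            a * x - ∑ l ∈ Finset.univ.erase (Sum.inr i),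
              a * (cfs l * monomial (Sum.elim gJ gK l) (1 : k)) := by
          rw [← hcfs, Finset.mul_sum]
          rw [← Finset.add_sum_erase _ _ (Finset.mem_univ (Sum.inr i))]
          simp only [Sum.elim_inr]
          ring
        rw [hsplit]
        refine Submodule.sub_mem _ (hJsub hx) ?_
        refine Submodule.sum_mem _ (fun l hl => ?_)
        have hlne : l ≠ Sum.inr i := (Finset.mem_erase.mp hl).1
        rw [show a * (cfs l * monomial (Sum.elim gJ gK l) (1 : k))
            = (a * cfs l) * monomial (Sum.elim gJ gK l) (1 : k) by ring]
        refine Ideal.mul_mem_left _ _ (Ideal.subset_span ?_)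
        rcases l with p | q
        · exact ⟨gJ p, Or.inl (Set.mem_range_self p), rfl⟩
        · exact ⟨gK q, Or.inr ⟨q, fun h => hlne (by rw [h]), rfl⟩, rfl⟩
      rw [show a * (cfs (Sum.inr i) * monomial (gK i) (1 : k))
          = (a * cfs (Sum.inr i)) * monomial (gK i) (1 : k) by ring] at h1
      have h2 := colon_step rj t gJ gK hB i (a * cfs (Sum.inr i)) h1
      have h3 : a * cfs (Sum.inr i) ∈ Jid.colon (Ideal.span {monomial (gK i) (1 : k)}) :=
        Ideal.mem_colon_span_singleton.mpr h2
      have h4 := (regQuotIff _ a).mp (hcol i) _ h3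
      exact Ideal.mem_colon_span_singleton.mp h4
    rw [← hcfs, Fintype.sum_sum_type]
    refine Ideal.add_mem _ (Submodule.sum_mem _ (fun p _ => ?_)) (Submodule.sum_mem _ (fun q _ => hterm q))
    exact Ideal.mul_mem_left _ _ (Ideal.subset_span (Set.mem_range_self p))
end

section
/- In a totally semimodular finite bounded graded poset, every atom ordering is a recursive atom ordering; in particular every totally semimodular finite bounded poset is CL-shellable. -/
variable {α : Type*}

/-- The atoms of the interval `[x, y]`: elements covering `x` and below `y`. -/
def atomsOf [PartialOrder α] (x y : α) : Set α := {z | x ⋖ z ∧ z ≤ y}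

/-- Recursive atom orderings of intervals `[x, y]` of a finite poset, in the sense of
Björner–Wachs.  `RAO x y l` means that the list `l` enumerates the atoms of `[x, y]`
and is a recursive atom ordering: either `[x, y]` has length at most `1` (every chain in
it has at most two elements), or
(1) for each atom `a_i` the interval `[a_i, y]` admits a recursive atom ordering in which
the atoms of `[a_i, y]` lying above some earlier `a_j` (`j < i`) come first, and
(2) for all `i < j` and `y'` with `a_i, a_j ≤ y' ≤ y` there are `k < j` and an atom `z` of
`[a_j, y]` with `z ≤ y'` and `a_k ≤ z`. -/
inductive RAO [PartialOrder α] : α → α → List α → Prop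
  | short (x y : α) (l : List α)
      (hshort : ∀ c : List α, c.Chain' (· < ·) → (∀ z ∈ c, x ≤ z ∧ z ≤ y) →
        c.length ≤ 2)
      (hnd : l.Nodup) (he : ∀ z, z ∈ l ↔ z ∈ atomsOf x y) : RAO x y l
  | step (x y : α) (l : List α) (hnd : l.Nodup) (he : ∀ z, z ∈ l ↔ z ∈ atomsOf x y)
      (l' : Fin l.length → List α)
      (h1 : ∀ i : Fin l.length, RAO (l.get i) y (l' i))
      (h1' : ∀ i : Fin l.length, ∃ nf : ℕ, ∀ z, z ∈ (l' i).take nf ↔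
          (z ∈ l' i ∧ ∃ j : Fin l.length, j < i ∧ l.get j ≤ z))
      (h2 : ∀ i j : Fin l.length, i < j → ∀ y' : α, l.get i ≤ y' → l.get j ≤ y' →
        y' ≤ y → ∃ k : Fin l.length, k < j ∧
          ∃ z, l.get j ⋖ z ∧ z ≤ y' ∧ l.get k ≤ z) :
      RAO x y l

/-- In a finite graded poset, the rank function is strictly monotone. -/
lemma rho_lt_of_lt [PartialOrder α] [Fintype α] (ρ : α → ℕ)
    (hg : ∀ a b : α, a ⋖ b → ρ b = ρ a + 1) {a b : α} (h : a < b) : ρ a < ρ b := by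
  have H : ∀ b a : α, a < b → ρ a < ρ b := by
    intro b
    refine wellFounded_lt.induction (C := fun b => ∀ a, a < b → ρ a < ρ b) b ?_
    intro b ih a hab
    obtain ⟨c, hac, hcb⟩ := exists_le_covBy_of_lt hab
    rcases hac.eq_or_lt with rfl | hlt
    · rw [hg _ _ hcb]; omega
    · have := ih c hcb.lt a hlt
      rw [hg _ _ hcb]; omega
  exact H b a h

lemma rho_le_of_le [PartialOrder α] [Fintype α] (ρ : α → ℕ)
    (hg : ∀ a b : α, a ⋖ b → ρ b = ρ a + 1) {a b : α} (h : a ≤ b) : ρ a ≤ ρ b := by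
  rcases h.eq_or_lt with rfl | hlt
  · exact le_rfl
  · exact (rho_lt_of_lt ρ hg hlt).le

/-- Intervals of rank-difference at most one have no chains with more than two
elements. -/
lemma short_chains [PartialOrder α] [Fintype α] (ρ : α → ℕ)
    (hg : ∀ a b : α, a ⋖ b → ρ b = ρ a + 1) {x y : α} (h : ρ y ≤ ρ x + 1) :
    ∀ c : List α, c.Chain' (· < ·) → (∀ z ∈ c, x ≤ z ∧ z ≤ y) → c.length ≤ 2 := by
  intro c hc hmem
  by_contra hlen
  push_neg at hlen
  have hp := (List.isChain_iff_pairwise).1 hc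
  have hget := List.pairwise_iff_get.1 hp
  have h2lt : (2 : ℕ) < c.length := hlen
  set i0 : Fin c.length := ⟨0, by omega⟩ with hi0
  set i1 : Fin c.length := ⟨1, by omega⟩ with hi1
  set i2 : Fin c.length := ⟨2, by omega⟩ with hi2
  have h01 : c.get i0 < c.get i1 := hget i0 i1 (by simp [hi0, hi1, Fin.lt_def])
  have h12 : c.get i1 < c.get i2 := hget i1 i2 (by simp [hi1, hi2, Fin.lt_def])
  have hx0 : x ≤ c.get i0 := (hmem _ (c.get_mem i0)).1
  have hy2 : c.get i2 ≤ y := (hmem _ (c.get_mem i2)).2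
  have r01 := rho_lt_of_lt ρ hg h01
  have r12 := rho_lt_of_lt ρ hg h12
  have rx0 := rho_le_of_le ρ hg hx0
  have ry2 := rho_le_of_le ρ hg hy2
  omega

/-- The key induction: in a totally semimodular finite graded poset, every atom
ordering of every interval is a recursive atom ordering. -/
lemma rao_main [PartialOrder α] [Fintype α] (ρ : α → ℕ)
    (hgraded : ∀ a b : α, a ⋖ b → ρ b = ρ a + 1)
    (htsm : ∀ b x u v : α, x ⋖ u → x ⋖ v → u ≠ v → u ≤ b → v ≤ b →
      ∃ z, z ≤ b ∧ u ⋖ z ∧ v ⋖ z) :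
    ∀ (n : ℕ) (x y : α) (l : List α), ρ y - ρ x ≤ n → l.Nodup →
      (∀ z, z ∈ l ↔ z ∈ atomsOf x y) → RAO x y l := by
  intro n
  induction n with
  | zero =>
    intro x y l hn hnd he
    exact RAO.short x y l (short_chains ρ hgraded (by omega)) hnd he
  | succ n ih =>
    intro x y l hn hnd he
    by_cases hcase : ρ y ≤ ρ x + 1
    · exact RAO.short x y l (short_chains ρ hgraded hcase) hnd he
    · classical
      have hatom : ∀ i : Fin l.length, x ⋖ l.get i ∧ l.get i ≤ y := fun i =>
        (he _).1 (l.get_mem i)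
      set P : Fin l.length → α → Prop :=
        fun i z => ∃ j : Fin l.length, j < i ∧ l.get j ≤ z with hP
      set F : Fin l.length → Finset α :=
        fun i => Finset.univ.filter (fun z => l.get i ⋖ z ∧ z ≤ y) with hF
      set l' : Fin l.length → List α := fun i =>
        ((F i).filter (fun z => P i z)).toList ++
          ((F i).filter (fun z => ¬ P i z)).toList with hl'
      have hmemF : ∀ (i : Fin l.length) z, z ∈ F i ↔ z ∈ atomsOf (l.get i) y := by
        intro i z; simp [hF, atomsOf]
      have hmem' : ∀ (i : Fin l.length) z, z ∈ l' i ↔ z ∈ atomsOf (l.get i) y := by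
        intro i z
        rw [← hmemF]
        simp only [hl', List.mem_append, Finset.mem_toList, Finset.mem_filter]
        constructor
        · rintro (⟨h, -⟩ | ⟨h, -⟩) <;> exact h
        · intro h
          by_cases hp : P i z
          · exact Or.inl ⟨h, hp⟩
          · exact Or.inr ⟨h, hp⟩
      have hnd' : ∀ i : Fin l.length, (l' i).Nodup := by
        intro i
        refine List.Nodup.append (Finset.nodup_toList _) (Finset.nodup_toList _) ?_
        intro a ha hb
        simp only [Finset.mem_toList, Finset.mem_filter] at ha hb
        exact hb.2 ha.2
      refine RAO.step x y l hnd he l' ?_ ?_ ?_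
      · intro i
        refine ih (l.get i) y (l' i) ?_ (hnd' i) (hmem' i)
        have hρ : ρ (l.get i) = ρ x + 1 := hgraded _ _ (hatom i).1
        omega
      · intro i
        refine ⟨((F i).filter (fun z => P i z)).toList.length, fun z => ?_⟩
        rw [hl', List.take_left]
        simp only [Finset.mem_toList, Finset.mem_filter, List.mem_append]
        constructor
        · rintro ⟨hzF, hzP⟩
          exact ⟨Or.inl ⟨hzF, hzP⟩, hzP⟩
        · rintro ⟨hz, hzP⟩
          rcases hz with ⟨hzF, _⟩ | ⟨hzF, hnP⟩
          · exact ⟨hzF, hzP⟩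
          · exact absurd hzP hnP
      · intro i j hij y' hi hj hy'
        have hne : l.get i ≠ l.get j := by
          intro hMeq
          exact hij.ne (hnd.get_inj_iff.1 hMeq)
        obtain ⟨z, hzy', hiz, hjz⟩ :=
          htsm y' x (l.get i) (l.get j) (hatom i).1 (hatom j).1 hne hi hj
        exact ⟨i, hij, z, hjz, hzy', hiz.le⟩

/-- Björner–Wachs.  In a totally semimodular finite bounded graded
poset, every atom ordering is a recursive atom ordering; in particular the poset is
CL-shellable (CL-shellability of a bounded poset being equivalent to the existence of a
recursive atom ordering). -/
theorem totally_semimodular_every_atom_ordering_recursive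
    [PartialOrder α] [Fintype α] [BoundedOrder α]
    (ρ : α → ℕ) (hgraded : ∀ a b : α, a ⋖ b → ρ b = ρ a + 1)
    (htsm : ∀ b x u v : α, x ⋖ u → x ⋖ v → u ≠ v → u ≤ b → v ≤ b →
      ∃ z, z ≤ b ∧ u ⋖ z ∧ v ⋖ z) :
    (∀ l : List α, l.Nodup → (∀ z, z ∈ l ↔ z ∈ atomsOf (⊥ : α) (⊤ : α)) →
      RAO (⊥ : α) (⊤ : α) l) ∧
    ∃ l : List α, l.Nodup ∧ (∀ z, z ∈ l ↔ z ∈ atomsOf (⊥ : α) (⊤ : α)) ∧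
      RAO (⊥ : α) (⊤ : α) l := by
  have hall : ∀ l : List α, l.Nodup → (∀ z, z ∈ l ↔ z ∈ atomsOf (⊥ : α) (⊤ : α)) →
      RAO (⊥ : α) (⊤ : α) l := fun l hnd he =>
    rao_main ρ hgraded htsm (ρ (⊤ : α) - ρ (⊥ : α)) ⊥ ⊤ l le_rfl hnd he
  refine ⟨hall, ?_⟩
  classical
  set l : List α :=
    (Finset.univ.filter (fun z => (⊥ : α) ⋖ z ∧ z ≤ (⊤ : α))).toList with hl
  have hnd : l.Nodup := Finset.nodup_toList _
  have he : ∀ z, z ∈ l ↔ z ∈ atomsOf (⊥ : α) (⊤ : α) := by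
    intro z; simp [hl, atomsOf]
  exact ⟨l, hnd, he, hall l hnd he⟩
end
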